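/- (Corollary 2.3, a basic hypergeometric summation formula) For every real number q with q > 0 and q ≠ 1, every parameter tuple (n,m,k,l) as in the context, and every x ∈ {0,1,…,m}, one has Σ_{u=0}^{x} q^u · C_q(n,u) · ([n−2u+1]_q/[n−u+1]_q) · Φ(u) = C_q(n,x) · Ψ(x), where Φ(u) := Σ_{r=0}^{min(u,M,N)} [(q^{−u};q)_r (q^{u−n−1};q)_r (q^{−M};q)_r (q^{−N};q)_r · q^r] / [(q;q)_r (q^{−m};q)_r (q^{m−n};q)_r (q^{−M−N};q)_r] and Ψ(x) := Σ_{r=0}^{min(x,M,N)} [(q^{−x};q)_r (q^{x−n};q)_r (q^{−M};q)_r (q^{−N};q)_r · q^r] / [(q;q)_r (q^{−m};q)_r (q^{m−n};q)_r (q^{−M−N};q)_r]. -/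

import Mathlib

open Finset

/-- The `q`-integer `[j]_q = 1 + q + ⋯ + q^(j-1)`. -/
noncomputable def qint (q : ℝ) (j : ℕ) : ℝ := ∑ i ∈ Finset.range j, q ^ i

/-- The `q`-factorial `[j]_q! = [1]_q [2]_q ⋯ [j]_q`. -/
noncomputable def qfact (q : ℝ) (j : ℕ) : ℝ := ∏ i ∈ Finset.range j, qint q (i + 1)

/-- The `q`-binomial coefficient `C_q(a,b)`. -/
noncomputable def qbinom (q : ℝ) (a b : ℕ) : ℝ :=
  if b ≤ a then qfact q a / (qfact q b * qfact q (a - b)) else 0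

/-- The `q`-Pochhammer symbol `(a;q)_r = (1-a)(1-aq)⋯(1-aq^(r-1))`. -/
noncomputable def qpoch (a q : ℝ) (r : ℕ) : ℝ := ∏ i ∈ Finset.range r, (1 - a * q ^ i)

/-- The `r`-th term of the terminating balanced `₄φ₃`-series with numerator parameters
`q^a, q^b, q^(-M), q^(-N)`, denominator parameters `q^(-m), q^(m-n), q^(-M-N)`,
base `q` and argument `q`. -/
noncomputable def hypTerm (q : ℝ) (n m M N : ℕ) (a b : ℤ) (r : ℕ) : ℝ :=
  (qpoch (q ^ a) q r * qpoch (q ^ b) q r * qpoch (q ^ (-(M : ℤ))) q r *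
      qpoch (q ^ (-(N : ℤ))) q r * q ^ r) /
    (qpoch q q r * qpoch (q ^ (-(m : ℤ))) q r * qpoch (q ^ ((m : ℤ) - n)) q r *
      qpoch (q ^ (-(M : ℤ) - N)) q r)

/-- The function `p(x;q)` of Definition 1.1 (in its `₄φ₃`-series form), with
`M = m - l` and `N = n - m - k + l`. -/
noncomputable def pq (q : ℝ) (n m k l x : ℕ) : ℝ :=
  qbinom q (n - k) (m - l) * (qbinom q n x / qbinom q n m) * q ^ x *
    (qint q (n - 2 * x + 1) / qint q (n - x + 1)) *
    ∑ r ∈ Finset.range (min x (min (m - l) (n + l - m - k)) + 1),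
      hypTerm q n m (m - l) (n + l - m - k) (-(x : ℤ)) ((x : ℤ) - n - 1) r


lemma qint_pos {q : ℝ} (hq : 0 < q) {j : ℕ} (hj : 0 < j) : 0 < qint q j :=
  Finset.sum_pos (fun i _ => pow_pos hq i) (by simpa [Finset.nonempty_range_iff] using hj.ne')

lemma qfact_pos {q : ℝ} (hq : 0 < q) (j : ℕ) : 0 < qfact q j :=
  Finset.prod_pos fun i _ => qint_pos hq (Nat.succ_pos i)

lemma qint_eq {q : ℝ} (hq1 : q ≠ 1) (j : ℕ) : qint q j = (q ^ j - 1) / (q - 1) := by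
  rw [qint, geom_sum_eq hq1]

lemma one_sub_zpow_ne {q : ℝ} (hq : 0 < q) (hq1 : q ≠ 1) {z : ℤ} (hz : z ≠ 0) :
    1 - q ^ z ≠ 0 := by
  rw [sub_ne_zero]
  intro h
  exact hz (((zpow_eq_one_iff_right₀ hq.le hq1)).mp h.symm)

lemma qpoch_shift (a q : ℝ) (r : ℕ) :
    (1 - a) * qpoch (a * q) q r = qpoch a q r * (1 - a * q ^ r) := by
  induction r with
  | zero => simp [qpoch]
  | succ r ih =>
    simp only [qpoch, Finset.prod_range_succ] at *
    rw [show (1-a) * (((∏ i ∈ Finset.range r, (1 - a*q * q^i))) * (1 - a*q*q^r)) =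
      ((1-a) * ∏ i ∈ Finset.range r, (1 - a*q * q^i)) * (1 - a*q*q^r) by ring, ih]
    ring

lemma qpoch_neg_pow_eq_zero {q : ℝ} (hq : 0 < q) {x r : ℕ} (h : x < r) :
    qpoch (q ^ (-(x:ℤ))) q r = 0 := by
  apply Finset.prod_eq_zero (Finset.mem_range.mpr h)
  rw [← zpow_natCast q x, ← zpow_add₀ hq.ne']
  simp

lemma hypTerm_zero (q : ℝ) (n m M N : ℕ) (a b : ℤ) : hypTerm q n m M N a b 0 = 1 := by
  simp [hypTerm, qpoch]

lemma qbinom_succ {q : ℝ} (hq : 0 < q) {n x : ℕ} (h : x < n) :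
    qbinom q n (x+1) * qint q (x+1) = qbinom q n x * qint q (n - x) := by
  rw [qbinom, qbinom, if_pos (show x+1 ≤ n from h), if_pos h.le]
  have h1 : qfact q (x+1) = qfact q x * qint q (x+1) := Finset.prod_range_succ _ _
  have h2 : qfact q (n - x) = qfact q (n - (x+1)) * qint q (n - x) := by
    rw [show n - x = (n - (x+1)) + 1 by omega, qfact, Finset.prod_range_succ,
      show n - (x+1) + 1 = n - x by omega]
    rfl
  rw [h1, h2]
  have f1 := (qfact_pos hq x).ne'
  have f2 := (qfact_pos hq (n - (x+1))).ne'
  have i1 := (qint_pos hq (Nat.succ_pos x)).ne'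
  have i2 := (qint_pos hq (show 0 < n - x by omega)).ne'
  field_simp

lemma core_identity {q : ℝ} (hq : 0 < q) (hq1 : q ≠ 1) {n x : ℕ} (r : ℕ)
    (h2 : 2*(x+1) ≤ n) :
    qint q (x+1) * (1 - q ^ (-(x:ℤ)-1) * q ^ r) * (1 - q ^ ((x:ℤ) - n))
      + q^(x+1) * qint q (n - (2*x+1)) * (1 - q ^ (-(x:ℤ)-1)) * (1 - q ^ ((x:ℤ) - n))
    = qint q (n - x) * (1 - q ^ (-(x:ℤ)-1)) * (1 - q ^ ((x:ℤ) - n) * q ^ r) := by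
  have hq0 : q ≠ 0 := hq.ne'
  have hq1' : q - 1 ≠ 0 := sub_ne_zero.mpr hq1
  rw [qint_eq hq1, qint_eq hq1, qint_eq hq1,
    show (-(x:ℤ)-1) = -((x+1 : ℕ) : ℤ) by push_cast; ring,
    show ((x:ℤ) - n) = ((x:ℕ):ℤ) - ((n:ℕ):ℤ) from rfl,
    zpow_neg, zpow_natCast, zpow_sub₀ hq0, zpow_natCast, zpow_natCast,
    pow_sub₀ q hq0 (show 2*x+1 ≤ n by omega),
    pow_sub₀ q hq0 (show x ≤ n by omega)]
  have hpn : (q:ℝ)^n ≠ 0 := pow_ne_zero _ hq0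
  have hpx : (q:ℝ)^x ≠ 0 := pow_ne_zero _ hq0
  field_simp
  ring

lemma poch_step {q : ℝ} (hq : 0 < q) (hq1 : q ≠ 1) {n x : ℕ} (r : ℕ)
    (h2 : 2*(x+1) ≤ n) :
    qbinom q n x * (qpoch (q ^ (-(x:ℤ))) q r * qpoch (q ^ ((x:ℤ) - n)) q r)
      + q^(x+1) * qbinom q n (x+1) * (qint q (n - (2*x+1)) / qint q (n - x)) *
        (qpoch (q ^ (-(x:ℤ)-1)) q r * qpoch (q ^ ((x:ℤ) - n)) q r)
    = qbinom q n (x+1) * (qpoch (q ^ (-(x:ℤ)-1)) q r * qpoch (q ^ ((x:ℤ) - n + 1)) q r) := by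
  have hq0 : q ≠ 0 := hq.ne'
  set e1 : ℝ := q ^ (-(x:ℤ)-1) with he1
  set e2 : ℝ := q ^ ((x:ℤ) - n) with he2
  have hs1 : (1 - e1) ≠ 0 := one_sub_zpow_ne hq hq1 (by omega)
  have hs2 : (1 - e2) ≠ 0 := one_sub_zpow_ne hq hq1 (by omega)
  have h1 : (1 - e1) * qpoch (q ^ (-(x:ℤ))) q r = qpoch e1 q r * (1 - e1 * q ^ r) := by
    have := qpoch_shift e1 q r
    rwa [show e1 * q = q ^ (-(x:ℤ)) by rw [he1, ← zpow_add_one₀ hq0]; norm_num] at this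
  have h2' : (1 - e2) * qpoch (q ^ ((x:ℤ) - n + 1)) q r = qpoch e2 q r * (1 - e2 * q ^ r) := by
    have := qpoch_shift e2 q r
    rwa [show e2 * q = q ^ ((x:ℤ) - n + 1) by rw [he2, ← zpow_add_one₀ hq0]] at this
  have h3 : qbinom q n (x+1) * qint q (x+1) = qbinom q n x * qint q (n - x) :=
    qbinom_succ hq (by omega)
  have h4 := core_identity hq hq1 r h2
  rw [← he1, ← he2] at h4
  have hInx : qint q (n - x) ≠ 0 := (qint_pos hq (by omega)).ne'
  have hIx1 : qint q (x+1) ≠ 0 := (qint_pos hq (Nat.succ_pos x)).ne'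
  have hinv : qint q (n - x) * (qint q (n - x))⁻¹ = 1 := mul_inv_cancel₀ hInx
  set pA := qpoch (q ^ (-(x:ℤ))) q r
  set pA' := qpoch e1 q r
  set pB := qpoch e2 q r
  set pB' := qpoch (q ^ ((x:ℤ) - n + 1)) q r
  set Bx := qbinom q n x
  set B1 := qbinom q n (x+1)
  set Ix1 := qint q (x+1)
  set Inx := qint q (n - x)
  set In2 := qint q (n - (2*x+1))
  -- cleared version
  have cleared : Bx * pA * pB * Ix1 * Inx + q^(x+1) * B1 * In2 * pA' * pB * Ix1
      = B1 * pA' * pB' * Ix1 * Inx := by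
    apply mul_right_cancel₀ (mul_ne_zero hs1 hs2)
    linear_combination (Bx * pB * Ix1 * Inx * (1 - e2)) * h1
      - (B1 * pA' * Ix1 * Inx * (1 - e1)) * h2'
      + (q^(x+1) * In2 * pA' * pB * (1 - e1) * (1 - e2)
          - pA' * Inx * (1 - e1) * pB * (1 - e2 * q ^ r)) * h3
      + (Bx * pA' * pB * Inx) * h4
  apply mul_right_cancel₀ (mul_ne_zero hIx1 hInx)
  rw [div_eq_mul_inv]
  linear_combination cleared + (q^(x+1) * B1 * In2 * pA' * pB * Ix1) * hinv

lemma myDivHelper (c1 c2 c3 N1 N2 N3 D : ℝ) (h : c1*N1 + c2*N2 = c3*N3) :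
    c1*(N1/D) + c2*(N2/D) = c3*(N3/D) := by
  rw [← mul_div_assoc, ← mul_div_assoc, ← mul_div_assoc, ← add_div, h]

lemma hyp_step {q : ℝ} (hq : 0 < q) (hq1 : q ≠ 1) (n m M N x r : ℕ)
    (h2 : 2*(x+1) ≤ n) :
    qbinom q n x * hypTerm q n m M N (-(x:ℤ)) ((x:ℤ) - n) r
      + q^(x+1) * qbinom q n (x+1) * (qint q (n - 2*(x+1) + 1) / qint q (n - (x+1) + 1)) *
        hypTerm q n m M N (-((x+1 : ℕ):ℤ)) (((x+1 : ℕ):ℤ) - n - 1) r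
    = qbinom q n (x+1) * hypTerm q n m M N (-((x+1 : ℕ):ℤ)) (((x+1 : ℕ):ℤ) - n) r := by
  rw [show (-((x+1 : ℕ):ℤ)) = -(x:ℤ)-1 by push_cast; ring,
    show (((x+1 : ℕ):ℤ) - n - 1) = (x:ℤ) - n by push_cast; ring,
    show (((x+1 : ℕ):ℤ) - n) = (x:ℤ) - n + 1 by push_cast; ring,
    show n - 2*(x+1) + 1 = n - (2*x+1) by omega,
    show n - (x+1) + 1 = n - x by omega]
  have key := poch_step hq hq1 r h2
  simp only [hypTerm]
  exact myDivHelper _ _ _ _ _ _ _ (by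
    linear_combination key * (qpoch (q ^ (-(M:ℤ))) q r * qpoch (q ^ (-(N:ℤ))) q r * q ^ r))


/-- **Corollary 2.3 (a basic hypergeometric summation formula).**
`Σ_{u=0}^{x} q^u C_q(n,u) ([n-2u+1]_q/[n-u+1]_q)
   ₄φ₃(q^{-u},q^{u-n-1},q^{-M},q^{-N};q^{-m},q^{m-n},q^{-M-N};q,q)
 = C_q(n,x) ₄φ₃(q^{-x},q^{x-n},q^{-M},q^{-N};q^{-m},q^{m-n},q^{-M-N};q,q)`. -/
theorem basic_hypergeometric_summation (q : ℝ) (hq : 0 < q) (hq1 : q ≠ 1)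
    (n m k l x : ℕ) (hm : m ≤ n / 2) (hk : k ≤ n)
    (hl : m + k ≤ n + l) (hlm : l ≤ m) (hlk : l ≤ k) (hx : x ≤ m) :
    ∑ u ∈ Finset.range (x + 1),
        q ^ u * qbinom q n u * (qint q (n - 2 * u + 1) / qint q (n - u + 1)) *
          ∑ r ∈ Finset.range (min u (min (m - l) (n + l - m - k)) + 1),
            hypTerm q n m (m - l) (n + l - m - k) (-(u : ℤ)) ((u : ℤ) - n - 1) r =
      qbinom q n x *
        ∑ r ∈ Finset.range (min x (min (m - l) (n + l - m - k)) + 1),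
          hypTerm q n m (m - l) (n + l - m - k) (-(x : ℤ)) ((x : ℤ) - n) r := by
  have h2m : 2 * m ≤ n := by omega
  revert hx
  induction x with
  | zero =>
    intro _
    rw [Finset.sum_range_one]
    simp only [Nat.zero_min, Nat.min_zero, Nat.mul_zero, Nat.sub_zero, Nat.cast_zero, neg_zero,
      Finset.sum_range_one, hypTerm_zero, pow_zero, one_mul, Nat.zero_le, zero_min]
    simp [hypTerm_zero]
    rw [div_self (qint_pos hq (Nat.succ_pos n)).ne', mul_one]
  | succ x ih =>
    intro hx
    have hx' : x ≤ m := by omega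
    have h2x : 2*(x+1) ≤ n := by omega
    rw [Finset.sum_range_succ, ih hx']
    have hext : ∑ r ∈ Finset.range (min x (min (m - l) (n + l - m - k)) + 1),
          hypTerm q n m (m - l) (n + l - m - k) (-(x : ℤ)) ((x : ℤ) - n) r
        = ∑ r ∈ Finset.range (min (x+1) (min (m - l) (n + l - m - k)) + 1),
          hypTerm q n m (m - l) (n + l - m - k) (-(x : ℤ)) ((x : ℤ) - n) r := by
      apply Finset.sum_subset (Finset.range_subset_range.mpr (by omega))
      intro r hr hns
      rw [Finset.mem_range] at hr hns
      have hxr : x < r := by omega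
      unfold hypTerm
      rw [qpoch_neg_pow_eq_zero hq hxr]
      simp
    rw [hext, Finset.mul_sum, Finset.mul_sum, Finset.mul_sum, ← Finset.sum_add_distrib]
    exact Finset.sum_congr rfl fun r _ =>
      hyp_step hq hq1 n m (m - l) (n + l - m - k) x r h2x
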